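/- arXiv:1110.3175 — 2 statements merged into one kernel-verified Lean document; each statement's English description precedes it below -/
import Mathlib

section
/- Let R be a right noetherian ring possessing right Krull dimension α, and suppose R is right Krull-homogeneous (every nonzero right ideal of R has Krull dimension α). Let I_1, ..., I_n be ideals of R such that each quotient ring R/I_i is right Krull-homogeneous of Krull dimension α, and let I = ∩ I_i. If K is a right ideal of R containing I with Krull dimension of K/I strictly less than α, then K ⊆ I_j for every j, and hence K = I; consequently R/I is right Krull-homogeneous of Krull dimension α. -/
universe u

/-- Gabriel–Rentschler deviation: `M` has Krull dimension `≤ α`: every descending chain of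
submodules has all but finitely many factors of Krull dimension `< α`. -/
def KdimLE (R : Type u) [Ring R] (α : Ordinal.{u}) (M : Type u)
    [AddCommGroup M] [Module R M] : Prop :=
  ∀ f : ℕ → Submodule R M, (∀ n, f (n + 1) ≤ f n) →
    ∃ N : ℕ, ∀ n ≥ N, f n = f (n + 1) ∨
      ∃ β : {γ : Ordinal.{u} // γ < α},
        KdimLE R β.1 (↥(f n) ⧸ (f (n + 1)).comap (f n).subtype)
termination_by α
decreasing_by exact β.2

open Classical in
/-- The Gabriel–Rentschler Krull dimension of a module (`⊥` for the zero module).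
For a right module take `R := Sᵐᵒᵖ`. -/
noncomputable def kdim (R : Type u) [Ring R] (M : Type u)
    [AddCommGroup M] [Module R M] : WithBot Ordinal.{u} :=
  if Subsingleton M then ⊥ else ↑(sInf {α : Ordinal.{u} | KdimLE R α M})

/-- `M` is a Krull-homogeneous `R`-module of Krull dimension `α`:
every nonzero submodule has Krull dimension `α`. -/
def IsKrullHomogeneous (R : Type u) [Ring R] (M : Type u) [AddCommGroup M]
    [Module R M] (α : WithBot Ordinal.{u}) : Prop :=
  ∀ N : Submodule R M, N ≠ ⊥ → kdim R ↥N = α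

namespace TwoSidedIdeal

/-- The underlying right ideal of a two-sided ideal. -/
def rightIdeal {R : Type u} [Ring R] (P : TwoSidedIdeal R) :
    Submodule Rᵐᵒᵖ R where
  carrier := P
  add_mem' := P.add_mem
  zero_mem' := P.zero_mem
  smul_mem' := fun _ _ hx => P.mul_mem_right _ _ hx

/-- A two-sided ideal `P` is prime: `P ≠ R` and `aRb ⊆ P` implies `a ∈ P` or `b ∈ P`. -/
def IsPrime {R : Type u} [Ring R] (P : TwoSidedIdeal R) : Prop :=
  P ≠ ⊤ ∧ ∀ a b : R, (∀ r : R, a * r * b ∈ P) → a ∈ P ∨ b ∈ P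

/-- A two-sided ideal `P` is semiprime: `aRa ⊆ P` implies `a ∈ P`. -/
def IsSemiprime {R : Type u} [Ring R] (P : TwoSidedIdeal R) : Prop :=
  ∀ a : R, (∀ r : R, a * r * a ∈ P) → a ∈ P

/-- A minimal prime of `R`. -/
def IsMinimalPrime {R : Type u} [Ring R] (P : TwoSidedIdeal R) : Prop :=
  P.IsPrime ∧ ∀ Q : TwoSidedIdeal R, Q.IsPrime → Q ≤ P → Q = P

/-- `I ^ n = 0`, phrased as: every product of `n` elements of `I` vanishes. -/
def PowEqZero {R : Type u} [Ring R] (I : TwoSidedIdeal R) (n : ℕ) : Prop :=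
  ∀ f : Fin n → R, (∀ i, f i ∈ I) → (List.ofFn f).prod = 0

end TwoSidedIdeal

/-- The right ideal `L·T` generated by products `l * t`, `l ∈ L`, `t ∈ T`. -/
def mulSpan {R : Type u} [Ring R] (L : Submodule Rᵐᵒᵖ R) (T : TwoSidedIdeal R) :
    Submodule Rᵐᵒᵖ R :=
  Submodule.span Rᵐᵒᵖ {x : R | ∃ l ∈ L, ∃ t ∈ T, x = l * t}

/-- `c` is regular modulo `P`: its image in `R/P` is neither a left nor a right
zero divisor. -/
def IsRegularMod {R : Type u} [Ring R] (P : TwoSidedIdeal R) (c : R) : Prop :=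
  ∀ x : R, (c * x ∈ P → x ∈ P) ∧ (x * c ∈ P → x ∈ P)

/-! If `K ⊄ I j`, the image of `K` in `R ⧸ I j` is a nonzero submodule, hence of Krull
dimension `α` by homogeneity of `R ⧸ I j`; but, as `I ≤ I j`, it is a homomorphic image of
`K ⧸ I`, whose dimension is `< α`. Hence `K ≤ ⨅ j, I j = I`. Applied to the preimage of a
nonzero submodule `N` of `R ⧸ I` with `|N| < α` this forces `N = 0`, so `R ⧸ I` is homogeneous;
its dimension is `α` because `R ↠ R ⧸ I ↠ R ⧸ I 0`. Krull dimension is monotone under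
submodules and quotients, and exists for noetherian modules by noetherian induction. -/

open Function Submodule

namespace Submodule

variable {R M M' : Type u} [Ring R] [AddCommGroup M] [Module R M] [AddCommGroup M'] [Module R M']

def subquotientMap (φ : M →ₗ[R] M') {A A' : Submodule R M} {B B' : Submodule R M'}
    (hA : A ≤ B.comap φ) (hA' : A' ≤ B'.comap φ) :
    (A ⧸ A'.comap A.subtype) →ₗ[R] (B ⧸ B'.comap B.subtype) :=
  -- with a bare lambda the hypothesis of `mapQ` gets an unfolded type and `mapQ_apply` no
  -- longer rewrites
  mapQ _ _ (φ.restrict hA)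
    (show A'.comap A.subtype ≤ (B'.comap B.subtype).comap (φ.restrict hA) from
      fun _ hx ↦ hA' hx)

theorem subquotientMap_injective (φ : M →ₗ[R] M') {A A' : Submodule R M}
    {B B' : Submodule R M'} (hA : A ≤ B.comap φ) (hA' : A' ≤ B'.comap φ)
    (h : B'.comap φ ⊓ A ≤ A') : Injective (subquotientMap φ hA hA') := by
  refine (injective_iff_map_eq_zero _).2 fun q hq ↦ ?_
  obtain ⟨⟨x, hx⟩, rfl⟩ := mkQ_surjective _ q
  rw [mkQ_apply, subquotientMap, mapQ_apply, Quotient.mk_eq_zero] at hq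
  exact (Quotient.mk_eq_zero _).2 (h ⟨hq, hx⟩)

theorem subquotientMap_surjective {φ : M →ₗ[R] M'} (hφ : Surjective φ) {A' : Submodule R M}
    {B B' : Submodule R M'} (hA' : A' ≤ B'.comap φ) :
    Surjective (subquotientMap φ (le_refl (B.comap φ)) hA') := by
  rintro ⟨y, hy⟩
  obtain ⟨x, rfl⟩ := hφ y
  exact ⟨Quotient.mk ⟨x, hy⟩, rfl⟩

end Submodule

section KrullDimension

variable {R M M' : Type u} [Ring R] [AddCommGroup M] [Module R M] [AddCommGroup M'] [Module R M']

theorem KdimLE.of_injective {α : Ordinal.{u}} (φ : M →ₗ[R] M') (hφ : Injective φ)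
    (h : KdimLE R α M') : KdimLE R α M := by
  induction α using WellFoundedLT.induction generalizing M M' with
  | _ α ih =>
  rw [KdimLE] at h ⊢
  intro f hf
  obtain ⟨N, hN⟩ := h (fun n ↦ (f n).map φ) fun n ↦ map_mono (hf n)
  refine ⟨N, fun n hn ↦ (hN n hn).imp (fun h ↦ map_injective_of_injective hφ h) ?_⟩
  rintro ⟨β, hβ⟩
  refine ⟨β, ih β β.2 (subquotientMap φ (le_comap_map _ _) (le_comap_map _ _)) ?_ hβ⟩
  refine subquotientMap_injective φ _ _ ?_
  rw [comap_map_eq_of_injective hφ]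
  exact inf_le_left

theorem KdimLE.of_surjective {α : Ordinal.{u}} (φ : M →ₗ[R] M') (hφ : Surjective φ)
    (h : KdimLE R α M) : KdimLE R α M' := by
  induction α using WellFoundedLT.induction generalizing M M' with
  | _ α ih =>
  rw [KdimLE] at h ⊢
  intro f hf
  obtain ⟨N, hN⟩ := h (fun n ↦ (f n).comap φ) fun n ↦ comap_mono (hf n)
  refine ⟨N, fun n hn ↦ (hN n hn).imp (fun h ↦ comap_injective_of_surjective hφ h) ?_⟩
  rintro ⟨β, hβ⟩
  exact ⟨β, ih β β.2 _ (subquotientMap_surjective hφ le_rfl) hβ⟩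

theorem exists_kdimLE_of_forall_quotient
    (h : ∀ P : Submodule R M, P ≠ ⊥ → ∃ α, KdimLE R α (M ⧸ P)) :
    ∃ α, KdimLE R α M := by
  choose d hd using h
  refine ⟨⨆ P : {P : Submodule R M // P ≠ ⊥}, d P.1 P.2 + 1, ?_⟩
  rw [KdimLE]
  intro f hf
  by_cases hbot : ∃ m, f m = ⊥
  · obtain ⟨m, hm⟩ := hbot
    have hanti : Antitone f := antitone_nat_of_succ_le hf
    refine ⟨m, fun k hk ↦ Or.inl ?_⟩
    rw [le_bot_iff.1 (hm ▸ hanti hk : f k ≤ ⊥),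
      le_bot_iff.1 (hm ▸ hanti (hk.trans k.le_succ) : f (k + 1) ≤ ⊥)]
  simp only [not_exists] at hbot
  refine ⟨0, fun k _ ↦ Or.inr ⟨⟨d _ (hbot (k + 1)),
    Ordinal.lt_iSup_add_one (fun P : {P : Submodule R M // P ≠ ⊥} ↦ d P.1 P.2)
      ⟨f (k + 1), hbot (k + 1)⟩⟩, ?_⟩⟩
  -- the factor `f k / f (k+1)` embeds in `M / f (k+1)`
  refine (hd _ _).of_injective (mapQ _ _ (f k).subtype le_rfl) ?_
  rw [← LinearMap.ker_eq_bot, ker_mapQ, mkQ_map_self]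

theorem exists_kdimLE [IsNoetherian R M] : ∃ α, KdimLE R α M := by
  suffices ∀ N : Submodule R M, ∃ α, KdimLE R α (M ⧸ N) by
    obtain ⟨α, hα⟩ := this ⊥
    let e := quotEquivOfEqBot (⊥ : Submodule R M) rfl
    exact ⟨α, hα.of_surjective e.toLinearMap e.surjective⟩
  refine IsNoetherian.induction fun N ih ↦ exists_kdimLE_of_forall_quotient fun P hP ↦ ?_
  have hPN : (P.comap N.mkQ).map N.mkQ = P := map_comap_eq_of_surjective N.mkQ_surjective P
  have hlt : N < P.comap N.mkQ := (le_comap_mkQ N P).lt_of_ne fun h ↦ hP <| by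
    rw [← hPN, ← h, mkQ_map_self]
  obtain ⟨α, hα⟩ := ih _ hlt
  let e := (quotEquivOfEq _ _ hPN).symm.trans
    (quotientQuotientEquivQuotient N _ (le_comap_mkQ N P))
  exact ⟨α, hα.of_surjective e.symm.toLinearMap e.symm.surjective⟩

-- Without a bound `kdim` is the junk value `sInf ∅ = 0`; noetherianity supplies one.
theorem kdim_le_of_surjective [IsNoetherian R M] (φ : M →ₗ[R] M') (hφ : Surjective φ) :
    kdim R M' ≤ kdim R M := by
  by_cases hM' : Subsingleton M'
  · simp [kdim, hM']
  have hM : ¬Subsingleton M := fun _ ↦ hM' hφ.subsingleton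
  rw [kdim, kdim, if_neg hM, if_neg hM', WithBot.coe_le_coe]
  exact csInf_le_csInf (OrderBot.bddBelow _) exists_kdimLE fun α hα ↦ hα.of_surjective φ hφ

theorem kdim_le_of_injective [IsNoetherian R M'] (φ : M →ₗ[R] M') (hφ : Injective φ) :
    kdim R M ≤ kdim R M' := by
  by_cases hM : Subsingleton M
  · simp [kdim, hM]
  have hM' : ¬Subsingleton M' := fun _ ↦ hM hφ.subsingleton
  rw [kdim, kdim, if_neg hM, if_neg hM', WithBot.coe_le_coe]
  exact csInf_le_csInf (OrderBot.bddBelow _) exists_kdimLE fun α hα ↦ hα.of_injective φ hφ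

theorem IsKrullHomogeneous.le_of_kdim_lt [IsNoetherian R M] {α : WithBot Ordinal.{u}}
    {P J K : Submodule R M} (hP : IsKrullHomogeneous R (M ⧸ P) α) (hJP : J ≤ P)
    (hK : kdim R (K ⧸ J.comap K.subtype) < α) : K ≤ P := by
  let f := (J.comap K.subtype).liftQ (P.mkQ ∘ₗ K.subtype) fun x hx ↦ by simpa using hJP hx
  by_contra hKP
  have hf : LinearMap.range f ≠ ⊥ := by
    rw [Ne, LinearMap.range_eq_bot]
    refine fun h ↦ hKP fun x hx ↦ ?_
    simpa [f] using LinearMap.congr_fun h (Submodule.Quotient.mk ⟨x, hx⟩)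
  exact (hP _ hf ▸ kdim_le_of_surjective f.rangeRestrict f.surjective_rangeRestrict).not_gt hK

theorem isKrullHomogeneous_quotient [IsNoetherian R M] {α : WithBot Ordinal.{u}}
    {J : Submodule R M} (hJ : kdim R (M ⧸ J) = α)
    (h : ∀ K : Submodule R M, kdim R (K ⧸ J.comap K.subtype) < α → K ≤ J) :
    IsKrullHomogeneous R (M ⧸ J) α := by
  intro N hN
  refine le_antisymm (hJ ▸ kdim_le_of_injective N.subtype N.injective_subtype)
    (not_lt.1 fun hlt ↦ hN ?_)
  let K := N.comap J.mkQ
  let g : K →ₗ[R] N := J.mkQ.restrict fun _ hx ↦ hx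
  have hker : J.comap K.subtype = LinearMap.ker g := by
    ext ⟨x, hx⟩
    simp [g, Subtype.ext_iff]
  have hKJ : K ≤ J := h K <| (kdim_le_of_injective _ <| LinearMap.ker_eq_bot.1 <|
    ker_liftQ_eq_bot' _ g hker).trans_lt hlt
  rw [eq_bot_iff, ← map_comap_eq_of_surjective J.mkQ_surjective N, ← mkQ_map_self J]
  exact map_mono hKJ

end KrullDimension

theorem stmt1_general {R : Type u} [Ring R] [IsNoetherian Rᵐᵒᵖ R]
    (α : WithBot Ordinal.{u})
    (hR : kdim Rᵐᵒᵖ R = α)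
    (n : ℕ) (hn : 0 < n) (I : Fin n → TwoSidedIdeal R)
    (hdim : ∀ i, kdim Rᵐᵒᵖ (R ⧸ (I i).rightIdeal) = α)
    (hhom : ∀ i, IsKrullHomogeneous Rᵐᵒᵖ (R ⧸ (I i).rightIdeal) α)
    (K : Submodule Rᵐᵒᵖ R)
    (hIK : (⨅ i, (I i).rightIdeal) ≤ K)
    (hKdim : kdim Rᵐᵒᵖ (↥K ⧸ (⨅ i, (I i).rightIdeal).comap K.subtype) < α) :
    (∀ j, K ≤ (I j).rightIdeal) ∧ K = (⨅ i, (I i).rightIdeal) ∧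
      kdim Rᵐᵒᵖ (R ⧸ (⨅ i, (I i).rightIdeal)) = α ∧
      IsKrullHomogeneous Rᵐᵒᵖ (R ⧸ (⨅ i, (I i).rightIdeal)) α := by
  have hsmall : ∀ K' : Submodule Rᵐᵒᵖ R,
      kdim Rᵐᵒᵖ (K' ⧸ (⨅ i, (I i).rightIdeal).comap K'.subtype) < α →
        ∀ j, K' ≤ (I j).rightIdeal :=
    fun K' hK' j ↦ (hhom j).le_of_kdim_lt (iInf_le _ j) hK'
  have hquot : kdim Rᵐᵒᵖ (R ⧸ ⨅ i, (I i).rightIdeal) = α :=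
    le_antisymm (hR ▸ kdim_le_of_surjective _ (mkQ_surjective _)) <| hdim ⟨0, hn⟩ ▸
      kdim_le_of_surjective (factor (iInf_le (fun i ↦ (I i).rightIdeal) ⟨0, hn⟩))
        (factor_surjective _)
  exact ⟨hsmall K hKdim, le_antisymm (le_iInf (hsmall K hKdim)) hIK, hquot,
    isKrullHomogeneous_quotient hquot fun K' hK' ↦ le_iInf (hsmall K' hK')⟩

/-- If `R` is right noetherian, right Krull-homogeneous of Krull dimension `α`,
`I 1, …, I n` are ideals with each `R ⧸ I i` right Krull-homogeneous of dimension `α`,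
and `K` is a right ideal containing `I = ⨅ i, I i` with `|K/I| < α`, then `K ≤ I j`
for every `j`, hence `K = I`, and `R ⧸ I` is right Krull-homogeneous of dimension `α`. -/
theorem stmt1 {R : Type u} [Ring R] [IsNoetherian Rᵐᵒᵖ R]
    (α : WithBot Ordinal.{u})
    (hR : kdim Rᵐᵒᵖ R = α) (hRhom : IsKrullHomogeneous Rᵐᵒᵖ R α)
    (n : ℕ) (hn : 0 < n) (I : Fin n → TwoSidedIdeal R)
    (hdim : ∀ i, kdim Rᵐᵒᵖ (R ⧸ (I i).rightIdeal) = α)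
    (hhom : ∀ i, IsKrullHomogeneous Rᵐᵒᵖ (R ⧸ (I i).rightIdeal) α)
    (K : Submodule Rᵐᵒᵖ R)
    (hIK : (⨅ i, (I i).rightIdeal) ≤ K)
    (hKdim : kdim Rᵐᵒᵖ (↥K ⧸ (⨅ i, (I i).rightIdeal).comap K.subtype) < α) :
    (∀ j, K ≤ (I j).rightIdeal) ∧ K = (⨅ i, (I i).rightIdeal) ∧
      kdim Rᵐᵒᵖ (R ⧸ (⨅ i, (I i).rightIdeal)) = α ∧
      IsKrullHomogeneous Rᵐᵒᵖ (R ⧸ (⨅ i, (I i).rightIdeal)) α :=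
  stmt1_general α hR n hn I hdim hhom K hIK hKdim
end

section
/- Let R be a right noetherian ring with right Krull dimension α, and let T be an ideal of R with |R/T|_r = α that is right weakly ideal invariant. Let I ⊆ L be right ideals of R such that L/I is an essential submodule of R/I, L/I is α-Krull-homogeneous, |R/L|_r < α, and LT ⊆ I. Then T ⊆ I, i.e., (R/I)T = 0. -/
universe u

/-! Suppose `T ⊄ I`. Since `LT ⊆ I`, the map `t ↦ t + I` factors through the nonzero module
`Q = T / (LT ∩ T)`, whose Krull dimension is `< α` by weak ideal invariance. Its image in `R/I` is
nonzero, so by essentiality it meets `L/I` in a nonzero submodule `N`, which has dimension `α` by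
homogeneity. But `N` is a subquotient of `Q`, so `|N| ≤ |Q| < α`. -/

section KrullDimension

variable {R : Type u} [Ring R]

theorem KdimLE.of_injective_s2 {α : Ordinal.{u}} {M N : Type u} [AddCommGroup M] [Module R M]
    [AddCommGroup N] [Module R N] (hN : KdimLE R α N) (f : M →ₗ[R] N)
    (hf : Function.Injective f) : KdimLE R α M := by
  induction α using WellFoundedLT.induction generalizing M N with
  | _ α IH =>
    rw [KdimLE] at hN ⊢
    intro g hg
    obtain ⟨n₀, hn₀⟩ := hN (fun n => (g n).map f) (fun n => Submodule.map_mono (hg n))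
    refine ⟨n₀, fun n hn => ?_⟩
    rcases hn₀ n hn with h | ⟨⟨β, hβ⟩, hfac⟩
    · exact Or.inl (Submodule.map_injective_of_injective hf h)
    · refine Or.inr ⟨⟨β, hβ⟩, ?_⟩
      set A := g n
      set B := g (n + 1)
      -- the factor `A / B` embeds into the factor `f A / f B`
      have hle : B.comap A.subtype ≤
          ((B.map f).comap (A.map f).subtype).comap
            (Submodule.equivMapOfInjective f hf A).toLinearMap := by
        intro x hx
        exact ⟨x.1, hx, (Submodule.coe_equivMapOfInjective_apply f hf A x).symm⟩
      refine IH β hβ hfac (Submodule.mapQ _ _ _ hle) ?_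
      rw [← LinearMap.ker_eq_bot, Submodule.mapQ, Submodule.ker_liftQ_eq_bot]
      intro x hx
      obtain ⟨b, hb, hfb⟩ : (f x : N) ∈ B.map f := by
        simpa [Submodule.coe_equivMapOfInjective_apply] using hx
      exact Submodule.mem_comap.mpr (show (x : M) ∈ B from hf hfb ▸ hb)

theorem KdimLE.of_surjective_s2 {α : Ordinal.{u}} {M N : Type u} [AddCommGroup M] [Module R M]
    [AddCommGroup N] [Module R N] (hM : KdimLE R α M) (f : M →ₗ[R] N)
    (hf : Function.Surjective f) : KdimLE R α N := by
  rw [KdimLE] at hM ⊢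
  intro g hg
  obtain ⟨n₀, hn₀⟩ := hM (fun n => (g n).comap f) (fun n => Submodule.comap_mono (hg n))
  refine ⟨n₀, fun n hn => ?_⟩
  rcases hn₀ n hn with h | ⟨⟨β, hβ⟩, hfac⟩
  · exact Or.inl (Submodule.comap_injective_of_surjective hf h)
  · refine Or.inr ⟨⟨β, hβ⟩, ?_⟩
    set A := g n
    set B := g (n + 1)
    -- the factor `f⁻¹ A / f⁻¹ B` is isomorphic to `A / B`
    set ψ : ↥(A.comap f) →ₗ[R] ↥A := f.restrict fun _ hx => hx
    set φ := Submodule.mapQ ((B.comap f).comap (A.comap f).subtype) (B.comap A.subtype) ψ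
      fun _ hx => hx
    have hinj : Function.Injective φ :=
      LinearMap.ker_eq_bot.mp (Submodule.ker_liftQ_eq_bot _ _ _ fun _ hx => by simpa [ψ] using hx)
    have hsurj : Function.Surjective φ := by
      rintro ⟨a⟩
      obtain ⟨m, hm⟩ := hf a.1
      exact ⟨Submodule.Quotient.mk ⟨m, by simp [hm]⟩,
        congrArg Submodule.Quotient.mk (Subtype.ext hm)⟩
    exact hfac.of_injective_s2 (LinearEquiv.ofBijective φ ⟨hinj, hsurj⟩).symm.toLinearMap
      (LinearEquiv.injective _)

variable {M N : Type u} [AddCommGroup M] [Module R M] [AddCommGroup N] [Module R N]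

theorem kdim_of_nontrivial [Nontrivial M] :
    kdim R M = ↑(sInf {α : Ordinal.{u} | KdimLE R α M}) :=
  if_neg (not_subsingleton M)

/-- `kdim` is the junk value `0` on a nonzero module with no Krull dimension. -/
theorem exists_kdimLE_of_kdim_lt [Nontrivial M] (h : kdim R M < kdim R N) :
    ∃ α, KdimLE R α N := by
  by_contra hN
  rcases subsingleton_or_nontrivial N with hsub | hnon
  · simp [kdim, hsub] at h
  · have hempty : {α : Ordinal.{u} | KdimLE R α N} = ∅ :=
      Set.eq_empty_of_forall_notMem (not_exists.mp hN)
    rw [kdim_of_nontrivial, kdim_of_nontrivial, hempty, Ordinal.sInf_empty] at h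
    exact (WithBot.coe_lt_coe.mp h).not_ge zero_le

theorem kdim_le_of_injective_s2 (f : M →ₗ[R] N) (hf : Function.Injective f)
    (hN : ∃ α, KdimLE R α N) : kdim R M ≤ kdim R N := by
  rcases subsingleton_or_nontrivial M with hM | hM
  · simp [kdim, hM]
  have : Nontrivial N := hf.nontrivial
  obtain ⟨α, hα⟩ := hN
  rw [kdim_of_nontrivial, kdim_of_nontrivial]
  exact WithBot.coe_le_coe.mpr <| csInf_le_csInf (OrderBot.bddBelow _) ⟨α, hα⟩
    fun _ h => h.of_injective_s2 f hf

theorem kdim_le_of_surjective_s2 (f : M →ₗ[R] N) (hf : Function.Surjective f)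
    (hM : ∃ α, KdimLE R α M) : kdim R N ≤ kdim R M := by
  rcases subsingleton_or_nontrivial N with hN | hN
  · simp [kdim, hN]
  have : Nontrivial M := hf.nontrivial
  obtain ⟨α, hα⟩ := hM
  rw [kdim_of_nontrivial, kdim_of_nontrivial]
  exact WithBot.coe_le_coe.mpr <| csInf_le_csInf (OrderBot.bddBelow _) ⟨α, hα⟩
    fun _ h => h.of_surjective_s2 f hf

theorem kdim_le_of_le_range (f : M →ₗ[R] N) (hM : ∃ α, KdimLE R α M) {P : Submodule R N}
    (hP : P ≤ LinearMap.range f) : kdim R P ≤ kdim R M :=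
  have hrange : ∃ α, KdimLE R α (LinearMap.range f) :=
    hM.imp fun _ h => h.of_surjective_s2 _ f.surjective_rangeRestrict
  (kdim_le_of_injective_s2 _ (Submodule.inclusion_injective hP) hrange).trans
    (kdim_le_of_surjective_s2 _ f.surjective_rangeRestrict hM)

end KrullDimension

theorem stmt2_general {R : Type u} [Ring R]
    (α : WithBot Ordinal.{u}) (hR : kdim Rᵐᵒᵖ R = α)
    (T : TwoSidedIdeal R)
    (hwii : ∀ L : Submodule Rᵐᵒᵖ R, kdim Rᵐᵒᵖ (R ⧸ L) < α →
      kdim Rᵐᵒᵖ (↥T.rightIdeal ⧸ (mulSpan L T).comap T.rightIdeal.subtype) < α)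
    (I L : Submodule Rᵐᵒᵖ R)
    (hess : ∀ N : Submodule Rᵐᵒᵖ (R ⧸ I), N ≠ ⊥ → L.map I.mkQ ⊓ N ≠ ⊥)
    (hhom : ∀ N : Submodule Rᵐᵒᵖ (R ⧸ I), N ≤ L.map I.mkQ → N ≠ ⊥ →
      kdim Rᵐᵒᵖ ↥N = α)
    (hLdim : kdim Rᵐᵒᵖ (R ⧸ L) < α)
    (hLT : mulSpan L T ≤ I) :
    T.rightIdeal ≤ I := by
  by_contra hTI
  obtain ⟨t, ht, htI⟩ := SetLike.not_le_iff_exists.mp hTI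
  set K := (mulSpan L T).comap T.rightIdeal.subtype
  set φ : (↥T.rightIdeal ⧸ K) →ₗ[Rᵐᵒᵖ] R ⧸ I :=
    K.liftQ (I.mkQ ∘ₗ T.rightIdeal.subtype) fun x hx => by simpa using hLT hx
  have hφt : φ (K.mkQ ⟨t, ht⟩) ≠ 0 := by simpa [φ] using htI
  have : Nontrivial (↥T.rightIdeal ⧸ K) :=
    nontrivial_of_ne (K.mkQ ⟨t, ht⟩) 0 fun h => hφt (by rw [h, map_zero])
  have hQ : kdim Rᵐᵒᵖ (↥T.rightIdeal ⧸ K) < α := hwii L hLdim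
  have hQbound : ∃ β, KdimLE Rᵐᵒᵖ β (↥T.rightIdeal ⧸ K) :=
    (exists_kdimLE_of_kdim_lt (hR ▸ hQ)).imp fun _ h =>
      (h.of_injective_s2 _ T.rightIdeal.injective_subtype).of_surjective_s2 _ K.mkQ_surjective
  have hrange : LinearMap.range φ ≠ ⊥ :=
    (Submodule.ne_bot_iff _).mpr ⟨_, LinearMap.mem_range_self φ _, hφt⟩
  have hN := hhom _ inf_le_left (hess _ hrange)
  exact (kdim_le_of_le_range φ hQbound inf_le_right).not_gt (hN ▸ hQ)

/-- Lemma 2, cyclic case: if `T` is a right weakly ideal invariant ideal with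
`|R/T|ᵣ = α = |R|ᵣ`, `I ≤ L` are right ideals with `L/I` essential in `R/I` and
`α`-Krull-homogeneous, `|R/L|ᵣ < α` and `LT ≤ I`, then `T ≤ I`. -/
theorem stmt2 {R : Type u} [Ring R] [IsNoetherian Rᵐᵒᵖ R]
    (α : WithBot Ordinal.{u}) (hR : kdim Rᵐᵒᵖ R = α)
    (T : TwoSidedIdeal R) (hT : kdim Rᵐᵒᵖ (R ⧸ T.rightIdeal) = α)
    (hwii : ∀ L : Submodule Rᵐᵒᵖ R, kdim Rᵐᵒᵖ (R ⧸ L) < α →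
      kdim Rᵐᵒᵖ (↥T.rightIdeal ⧸ (mulSpan L T).comap T.rightIdeal.subtype) < α)
    (I L : Submodule Rᵐᵒᵖ R) (hIL : I ≤ L)
    (hess : ∀ N : Submodule Rᵐᵒᵖ (R ⧸ I), N ≠ ⊥ → L.map I.mkQ ⊓ N ≠ ⊥)
    (hhom : ∀ N : Submodule Rᵐᵒᵖ (R ⧸ I), N ≤ L.map I.mkQ → N ≠ ⊥ →
      kdim Rᵐᵒᵖ ↥N = α)
    (hLdim : kdim Rᵐᵒᵖ (R ⧸ L) < α)
    (hLT : mulSpan L T ≤ I) :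
    T.rightIdeal ≤ I :=
  stmt2_general α hR T hwii I L hess hhom hLdim hLT
end
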